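/- arXiv:2108.09831 — 2 statements merged into one kernel-verified Lean document; each statement's English description precedes it below -/
import Mathlib

section
/- The functions ψ^{kℓ}, 1 ≤ k ≤ ℓ ≤ N, are linearly independent and their linear span equals the a-orthogonal complement of the tangent space, {z ∈ Ṽ^N : a(z, η) = 0 for all η ∈ T_φ}; in particular they form a basis of this complement. -/
open scoped RealInnerProductSpace

/-- Multiplication of a tuple by a matrix from the right: `(vS)_j = Σ_i S_{ij} v_i`. -/
def smulMat {N : ℕ} {V : Type*} [AddCommGroup V] [Module ℝ V]
    (v : Fin N → V) (S : Matrix (Fin N) (Fin N) ℝ) : Fin N → V :=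
  fun j => ∑ i, S i j • v i

/-- The normalized symmetric matrices `S^{ij}`: `S^{ii} = e_i e_iᵀ` and, for `i ≠ j`,
`S^{ij} = (e_i e_jᵀ + e_j e_iᵀ)/√2`. -/
noncomputable def SijMat {N : ℕ} (i j : Fin N) : Matrix (Fin N) (Fin N) ℝ :=
  if i = j then Matrix.single i i 1
  else (Real.sqrt 2)⁻¹ • (Matrix.single i j 1 + Matrix.single j i 1)

/-- The outer product of tuples in `Ṽ^N`, computed in `H₀` through the embedding `ι`. -/
noncomputable def outerProdI {N : ℕ} {V H₀ : Type*} [NormedAddCommGroup V]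
    [NormedAddCommGroup H₀] [InnerProductSpace ℝ H₀] [NormedSpace ℝ V]
    (ι : V →L[ℝ] H₀) (v w : Fin N → V) : Matrix (Fin N) (Fin N) ℝ :=
  Matrix.of fun i j => ⟪ι (v i), ι (w j)⟫

/-- The inner product `(v,w)_H = tr⟦v,w⟧`, computed in `H₀` through the embedding `ι`. -/
noncomputable def innerHI {N : ℕ} {V H₀ : Type*} [NormedAddCommGroup V]
    [NormedAddCommGroup H₀] [InnerProductSpace ℝ H₀] [NormedSpace ℝ V]
    (ι : V →L[ℝ] H₀) (v w : Fin N → V) : ℝ :=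
  ∑ j, ⟪ι (v j), ι (w j)⟫

/-!
Pair `w ∈ Ṽ^N` with the `φ^{ij}`, `i ≤ j`, to get a linear map `L : Ṽ^N → ℝ^{i ≤ j}`. If `L w = 0`
then every symmetrised entry of `⟦w,φ⟧` vanishes, i.e. `w ∈ T_φ`; if moreover `w` is
`a`-orthogonal to `T_φ`, then `a(w,w) = 0` and coercivity forces `w = 0`. So `L` is injective on
the `a`-orthogonal complement `W` of `T_φ`, and the `ψ^{kℓ} ∈ W` satisfy `L ψ^{kℓ} = e_{kℓ}`;
hence they are independent, and any `z ∈ W` equals `Σ (L z)_{kℓ} ψ^{kℓ}`.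
-/

section Biorthogonal

variable {R M κ : Type*} [CommRing R] [AddCommGroup M] [Module R M] [DecidableEq κ]

theorem linearIndependent_of_comp_eq_single (L : M →ₗ[R] κ → R) (ψ : κ → M)
    (hψL : ∀ p, L (ψ p) = Pi.single p 1) : LinearIndependent R ψ :=
  LinearIndependent.of_comp L <| by
    simpa only [Function.comp_def, hψL] using Pi.linearIndependent_single_one κ R

theorem span_range_eq_of_comp_eq_single [Fintype κ] (W : Submodule R M) (L : M →ₗ[R] κ → R)
    (hL : ∀ w ∈ W, L w = 0 → w = 0) (ψ : κ → M) (hψW : ∀ p, ψ p ∈ W)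
    (hψL : ∀ p, L (ψ p) = Pi.single p 1) : Submodule.span R (Set.range ψ) = W := by
  refine le_antisymm (Submodule.span_le.mpr (Set.range_subset_iff.mpr hψW)) fun z hz => ?_
  have hsum_mem : ∑ p, L z p • ψ p ∈ W := W.sum_mem fun p _ => W.smul_mem _ (hψW p)
  have hL_sum : L (∑ p, L z p • ψ p) = L z := by
    simp only [map_sum, map_smul, hψL, ← Pi.single_smul, smul_eq_mul, mul_one]
    exact Finset.univ_sum_single (L z)
  have hz_eq : z = ∑ p, L z p • ψ p :=
    sub_eq_zero.mp (hL _ (W.sub_mem hz hsum_mem) (by rw [map_sub, hL_sum, sub_self]))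
  rw [hz_eq]
  exact Submodule.sum_mem _ fun p _ => Submodule.smul_mem _ _ (Submodule.subset_span ⟨p, rfl⟩)

end Biorthogonal

section Coercive

variable {V : Type*} [NormedAddCommGroup V] [NormedSpace ℝ V] {aForm : V →ₗ[ℝ] V →ₗ[ℝ] ℝ}

theorem apply_self_nonneg_of_coercive (hcoer : ∃ α > 0, ∀ u : V, α * ‖u‖ ^ 2 ≤ aForm u u)
    (u : V) : 0 ≤ aForm u u := by
  obtain ⟨α, hα, hco⟩ := hcoer
  exact (by positivity : 0 ≤ α * ‖u‖ ^ 2).trans (hco u)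

theorem eq_zero_of_coercive_of_apply_self_eq_zero
    (hcoer : ∃ α > 0, ∀ u : V, α * ‖u‖ ^ 2 ≤ aForm u u) {u : V} (hu : aForm u u = 0) :
    u = 0 := by
  obtain ⟨α, hα, hco⟩ := hcoer
  have hnorm : α * ‖u‖ ^ 2 ≤ 0 := hu ▸ hco u
  have : ‖u‖ ^ 2 ≤ 0 := nonpos_of_mul_nonpos_right hnorm hα
  simpa using this

theorem eq_zero_of_coercive_of_sum_apply_self_eq_zero {ι : Type*} [Fintype ι]
    (hcoer : ∃ α > 0, ∀ u : V, α * ‖u‖ ^ 2 ≤ aForm u u) {w : ι → V}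
    (hw : ∑ j, aForm (w j) (w j) = 0) : w = 0 := by
  rw [Finset.sum_eq_zero_iff_of_nonneg fun j _ => apply_self_nonneg_of_coercive hcoer _] at hw
  exact funext fun j => eq_zero_of_coercive_of_apply_self_eq_zero hcoer (hw j (Finset.mem_univ j))

end Coercive

section Frames

variable {N : ℕ} {V H₀ : Type*} [NormedAddCommGroup V] [NormedSpace ℝ V]
  [NormedAddCommGroup H₀] [InnerProductSpace ℝ H₀] (ι : V →L[ℝ] H₀)

/-- The `a`-orthogonal complement `{z : a(z, η) = 0 for all η ∈ T_φ}` of the tangent space. -/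
def aOrthTangent (aForm : V →ₗ[ℝ] V →ₗ[ℝ] ℝ) (φ : Fin N → V) : Submodule ℝ (Fin N → V) where
  carrier := {z | ∀ η : Fin N → V,
    outerProdI ι η φ + outerProdI ι φ η = 0 → ∑ j, aForm (z j) (η j) = 0}
  add_mem' {z z'} hz hz' η hη := by
    simp only [Pi.add_apply, map_add, LinearMap.add_apply, Finset.sum_add_distrib, hz η hη,
      hz' η hη, add_zero]
  zero_mem' η _ := by simp
  smul_mem' c z hz η hη := by
    simp only [Pi.smul_apply, map_smul, LinearMap.smul_apply, smul_eq_mul, ← Finset.mul_sum,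
      hz η hη, mul_zero]

noncomputable def innerHIPairing {κ : Type*} (x : κ → Fin N → V) :
    (Fin N → V) →ₗ[ℝ] κ → ℝ where
  toFun w p := innerHI ι w (x p)
  map_add' w w' := by
    ext p
    simp only [innerHI, Pi.add_apply, map_add, inner_add_left, Finset.sum_add_distrib]
  map_smul' c w := by
    ext p
    simp only [innerHI, Pi.smul_apply, map_smul, real_inner_smul_left, smul_eq_mul,
      Finset.mul_sum, RingHom.id_apply]

theorem innerHI_smulMat (w φ : Fin N → V) (S : Matrix (Fin N) (Fin N) ℝ) :
    innerHI ι w (smulMat φ S) = ∑ j, ∑ i, S i j * ⟪ι (w j), ι (φ i)⟫ := by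
  simp [innerHI, smulMat, inner_sum, real_inner_smul_right]

theorem innerHI_smulMat_SijMat (w φ : Fin N → V) (i j : Fin N) :
    innerHI ι w (smulMat φ (SijMat i j)) =
      if i = j then ⟪ι (w i), ι (φ i)⟫
      else (√2)⁻¹ * (⟪ι (w j), ι (φ i)⟫ + ⟪ι (w i), ι (φ j)⟫) := by
  rw [innerHI_smulMat]
  by_cases hij : i = j
  · subst hij
    simp [SijMat, Matrix.single, ite_and]
  · simp only [SijMat, if_neg hij, Matrix.add_apply, Matrix.smul_apply, Matrix.single,
      Matrix.of_apply, smul_eq_mul, ite_and, mul_add, add_mul, ite_mul, zero_mul,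
      mul_ite, mul_one, mul_zero, Finset.sum_add_distrib, Finset.sum_ite_eq,
      Finset.mem_univ, if_true]

theorem outerProdI_add_eq_zero_of_innerHI_SijMat_eq_zero {w φ : Fin N → V}
    (hw : ∀ i j : Fin N, i ≤ j → innerHI ι w (smulMat φ (SijMat i j)) = 0) :
    outerProdI ι w φ + outerProdI ι φ w = 0 := by
  have hsym_part : ∀ i j, i ≤ j → ⟪ι (w i), ι (φ j)⟫ + ⟪ι (w j), ι (φ i)⟫ = 0 := by
    intro i j hij
    have h := hw i j hij
    rw [innerHI_smulMat_SijMat] at h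
    split_ifs at h with heq
    · subst heq
      rw [h, add_zero]
    · rw [add_comm]
      exact (mul_eq_zero.mp h).resolve_left (by positivity)
  ext i j
  simp only [Matrix.add_apply, outerProdI, Matrix.of_apply, Matrix.zero_apply,
    real_inner_comm (ι (w j)) (ι (φ i))]
  rcases le_total i j with hij | hji
  · exact hsym_part i j hij
  · rw [add_comm]
    exact hsym_part j i hji

theorem eq_zero_of_mem_aOrthTangent_of_innerHI_SijMat_eq_zero {aForm : V →ₗ[ℝ] V →ₗ[ℝ] ℝ}
    (hcoer : ∃ α > 0, ∀ u : V, α * ‖u‖ ^ 2 ≤ aForm u u) {w φ : Fin N → V}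
    (hwa : w ∈ aOrthTangent ι aForm φ)
    (hw : ∀ i j : Fin N, i ≤ j → innerHI ι w (smulMat φ (SijMat i j)) = 0) : w = 0 :=
  eq_zero_of_coercive_of_sum_apply_self_eq_zero hcoer
    (hwa w (outerProdI_add_eq_zero_of_innerHI_SijMat_eq_zero ι hw))

end Frames

theorem psi_kl_basis_of_a_normal_space_general {N : ℕ}
    {V H₀ : Type*}
    [NormedAddCommGroup V] [InnerProductSpace ℝ V]
    [NormedAddCommGroup H₀] [InnerProductSpace ℝ H₀]
    (ι : V →L[ℝ] H₀)
    (aForm : V →ₗ[ℝ] V →ₗ[ℝ] ℝ)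
    (hcoer : ∃ α > 0, ∀ u : V, α * ‖u‖ ^ 2 ≤ aForm u u)
    (φ : Fin N → V)
    (ψ : Fin N → Fin N → Fin N → V)
    (hψa : ∀ k ℓ : Fin N, k ≤ ℓ →
      ∀ η : Fin N → V, outerProdI ι η φ + outerProdI ι φ η = 0 →
        (∑ j, aForm (ψ k ℓ j) (η j)) = 0)
    (hψH : ∀ k ℓ : Fin N, k ≤ ℓ → ∀ i j : Fin N, i ≤ j →
      innerHI ι (ψ k ℓ) (smulMat φ (SijMat i j)) =
        (if i = k then (1 : ℝ) else 0) * (if j = ℓ then (1 : ℝ) else 0)) :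
    LinearIndependent ℝ
      (fun p : {p : Fin N × Fin N // p.1 ≤ p.2} => ψ p.1.1 p.1.2) ∧
    (Submodule.span ℝ
        {x : Fin N → V | ∃ k ℓ : Fin N, k ≤ ℓ ∧ x = ψ k ℓ} : Set (Fin N → V)) =
      {z : Fin N → V | ∀ η : Fin N → V,
        outerProdI ι η φ + outerProdI ι φ η = 0 → (∑ j, aForm (z j) (η j)) = 0} := by
  let L := innerHIPairing ι fun q : {p : Fin N × Fin N // p.1 ≤ p.2} =>
    smulMat φ (SijMat q.1.1 q.1.2)
  have hψL : ∀ p, L (ψ p.1.1 p.1.2) = Pi.single p 1 := fun p => funext fun q => by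
    simp [L, innerHIPairing, hψH p.1.1 p.1.2 p.2 q.1.1 q.1.2 q.2, Pi.single_apply,
      Subtype.ext_iff, Prod.ext_iff, ← ite_and, and_comm, eq_comm]
  have hL : ∀ w ∈ aOrthTangent ι aForm φ, L w = 0 → w = 0 := fun w hwa hLw =>
    eq_zero_of_mem_aOrthTangent_of_innerHI_SijMat_eq_zero ι hcoer hwa
      fun i j hij => congrFun hLw ⟨(i, j), hij⟩
  have hrange : {x : Fin N → V | ∃ k ℓ : Fin N, k ≤ ℓ ∧ x = ψ k ℓ} =
      Set.range fun p : {p : Fin N × Fin N // p.1 ≤ p.2} => ψ p.1.1 p.1.2 := by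
    ext x
    simp [eq_comm]
  refine ⟨linearIndependent_of_comp_eq_single L _ hψL, ?_⟩
  rw [hrange, span_range_eq_of_comp_eq_single _ L hL _ (fun p => hψa _ _ p.2) hψL]
  rfl

/-- the functions `ψ^{kℓ}` (for `k ≤ ℓ`) are linearly independent and span
the `a`-orthogonal complement of the tangent space `T_φ`. -/
theorem psi_kl_basis_of_a_normal_space {N : ℕ} (hN : 1 ≤ N)
    {V H₀ : Type*}
    [NormedAddCommGroup V] [InnerProductSpace ℝ V] [CompleteSpace V]
    [NormedAddCommGroup H₀] [InnerProductSpace ℝ H₀] [CompleteSpace H₀]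
    (ι : V →L[ℝ] H₀) (hι : Function.Injective ι)
    (aForm : V →ₗ[ℝ] V →ₗ[ℝ] ℝ)
    (hsymm : ∀ u w : V, aForm u w = aForm w u)
    (hcoer : ∃ α > 0, ∀ u : V, α * ‖u‖ ^ 2 ≤ aForm u u)
    (hbdd : ∃ β > 0, ∀ u w : V, |aForm u w| ≤ β * ‖u‖ * ‖w‖)
    (φ : Fin N → V) (hφ : outerProdI ι φ φ = 1)
    (ψ : Fin N → Fin N → Fin N → V)
    (hψa : ∀ k ℓ : Fin N, k ≤ ℓ →
      ∀ η : Fin N → V, outerProdI ι η φ + outerProdI ι φ η = 0 →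
        (∑ j, aForm (ψ k ℓ j) (η j)) = 0)
    (hψH : ∀ k ℓ : Fin N, k ≤ ℓ → ∀ i j : Fin N, i ≤ j →
      innerHI ι (ψ k ℓ) (smulMat φ (SijMat i j)) =
        (if i = k then (1 : ℝ) else 0) * (if j = ℓ then (1 : ℝ) else 0)) :
    LinearIndependent ℝ
      (fun p : {p : Fin N × Fin N // p.1 ≤ p.2} => ψ p.1.1 p.1.2) ∧
    (Submodule.span ℝ
        {x : Fin N → V | ∃ k ℓ : Fin N, k ≤ ℓ ∧ x = ψ k ℓ} : Set (Fin N → V)) =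
      {z : Fin N → V | ∀ η : Fin N → V,
        outerProdI ι η φ + outerProdI ι φ η = 0 → (∑ j, aForm (z j) (η j)) = 0} :=
  psi_kl_basis_of_a_normal_space_general ι aForm hcoer φ ψ hψa hψH
end

section
/- Let Tφ := (T(ιφ_1), …, T(ιφ_N)) ∈ Ṽ^N and M := ⟦φ, Tφ⟧ ∈ ℝ^{N×N} (entries M_{ij} = ⟨ιφ_i, ι T(ιφ_j)⟩). Then M is invertible, and ψ := (Tφ)·M^{-1} is the unique element of Ṽ^N satisfying a(ψ, η) = 0 for all η ∈ T_φ and (ψ, φS^{ij})_H = δ_{ij} for all 1 ≤ i ≤ j ≤ N; equivalently, ψ = Σ_{k=1}^N ψ^{kk}. -/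
/-!
Since `a(Tφ_i, w) = ⟨ιφ_i, ιw⟩`, the matrix `M = ⟦φ, Tφ⟧` is the Gram matrix of `Tφ` for the
energy inner product `a`; it is positive definite because `a(Σ c_i Tφ_i, φ_k) = c_k`.
For `ψ = (Tφ)M⁻¹` one gets `⟦ψ, φ⟧ = (M M⁻¹)ᵀ = I`, which gives the `S^{ij}`-constraints, and
`a(ψ, η) = tr(M⁻¹⟦φ, η⟧)` vanishes on `T_φ` as the trace of a symmetric times an antisymmetric
matrix. The constraints for `i ≤ j` pin down the symmetric part of `⟦z, φ⟧`, so the difference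
of two solutions lies in `T_φ` and is `a`-orthogonal to it, hence vanishes by coercivity.
Finally `Σ_k ψ^{kk}` satisfies the constraints by linearity, since `Σ_k δ_{ik}δ_{jk} = δ_{ij}`.
-/

open scoped RealInnerProductSpace

/-- The tuple `Tφ = (T(ιφ_1), …, T(ιφ_N))`. -/
noncomputable def Tphi {N : ℕ} {V H₀ : Type*} (ι : V → H₀) (T : H₀ → V)
    (φ : Fin N → V) : Fin N → V :=
  fun i => T (ι (φ i))

/-- The matrix `M = ⟦φ, Tφ⟧` with entries `⟨ιφ_i, ι T(ιφ_j)⟩`. -/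
noncomputable def Mmat {N : ℕ} {V H₀ : Type*} [NormedAddCommGroup V]
    [NormedAddCommGroup H₀] [InnerProductSpace ℝ H₀] [NormedSpace ℝ V]
    (ι : V →L[ℝ] H₀) (T : H₀ → V) (φ : Fin N → V) : Matrix (Fin N) (Fin N) ℝ :=
  Matrix.of fun i j => ⟪ι (φ i), ι (T (ι (φ j)))⟫

open Matrix

namespace SijMat

variable {N : ℕ}

theorem trace_mul (E : Matrix (Fin N) (Fin N) ℝ) (i j : Fin N) :
    (E * SijMat i j).trace = if i = j then E i i else (√2)⁻¹ * (E j i + E i j) := by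
  unfold SijMat
  split_ifs with h
  · simp [trace_mul_single, h]
  · simp [Matrix.mul_add, trace_mul_single]
    ring

theorem trace (i j : Fin N) : (SijMat i j).trace = if i = j then 1 else 0 := by
  rw [← one_mul (SijMat i j), trace_mul]
  split_ifs with h
  · simp [one_apply]
  · simp [one_apply, h, Ne.symm h]

theorem add_transpose_eq_zero_of_trace_mul {E : Matrix (Fin N) (Fin N) ℝ}
    (hE : ∀ i j, i ≤ j → (E * SijMat i j).trace = 0) : E + Eᵀ = 0 := by
  have hsym : ∀ i j, i ≤ j → E i j + E j i = 0 := by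
    intro i j hij
    have h := hE i j hij
    rw [trace_mul] at h
    split_ifs at h with hij'
    · subst hij'; linarith
    · have : (√2)⁻¹ ≠ 0 := by positivity
      linarith [(mul_eq_zero.1 h).resolve_left this]
  ext i j
  rcases le_total i j with h | h
  · simpa using hsym i j h
  · simpa [add_comm] using hsym j i h

end SijMat

theorem Matrix.trace_mul_eq_zero_of_isSymm_of_add_transpose_eq_zero {N : ℕ}
    {S A : Matrix (Fin N) (Fin N) ℝ} (hS : S.IsSymm) (hA : A + Aᵀ = 0) :
    (S * A).trace = 0 := by
  have hA' : Aᵀ = -A := eq_neg_of_add_eq_zero_right hA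
  have : (S * A).trace = -(S * A).trace := calc
    (S * A).trace = (S * A)ᵀ.trace := (trace_transpose _).symm
    _ = (-A * S).trace := by rw [transpose_mul, hA', hS.eq]
    _ = -(S * A).trace := by rw [neg_mul, trace_neg, trace_mul_comm]
  linarith

section TupleGeometry

variable {N : ℕ} {V H₀ : Type*} [NormedAddCommGroup V] [NormedSpace ℝ V]
  [NormedAddCommGroup H₀] [InnerProductSpace ℝ H₀] (ι : V →L[ℝ] H₀)

theorem transpose_outerProdI (v w : Fin N → V) :
    (outerProdI ι v w)ᵀ = outerProdI ι w v := by
  ext i j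
  exact real_inner_comm _ _

theorem outerProdI_smulMat_left (v w : Fin N → V) (S : Matrix (Fin N) (Fin N) ℝ) :
    outerProdI ι (smulMat v S) w = Sᵀ * outerProdI ι v w := by
  ext i j
  simp [outerProdI, smulMat, mul_apply, sum_inner, real_inner_smul_left]

theorem outerProdI_smulMat_right (v w : Fin N → V) (S : Matrix (Fin N) (Fin N) ℝ) :
    outerProdI ι v (smulMat w S) = outerProdI ι v w * S := by
  rw [← transpose_outerProdI, outerProdI_smulMat_left, transpose_mul, transpose_outerProdI,
    transpose_transpose]

theorem outerProdI_sub_left (u v w : Fin N → V) :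
    outerProdI ι (u - v) w = outerProdI ι u w - outerProdI ι v w := by
  ext i j
  simp [outerProdI, inner_sub_left]

theorem innerHI_eq_trace (v w : Fin N → V) : innerHI ι v w = (outerProdI ι v w).trace := rfl

theorem innerHI_sum_left {κ : Type*} (s : Finset κ) (v : κ → Fin N → V) (w : Fin N → V) :
    innerHI ι (∑ k ∈ s, v k) w = ∑ k ∈ s, innerHI ι (v k) w := by
  simp only [innerHI, Finset.sum_apply, map_sum, sum_inner]
  exact Finset.sum_comm

theorem innerHI_smulMat_right (v w : Fin N → V) (S : Matrix (Fin N) (Fin N) ℝ) :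
    innerHI ι v (smulMat w S) = (outerProdI ι v w * S).trace := by
  rw [innerHI_eq_trace, outerProdI_smulMat_right]

end TupleGeometry

section BilinearForm

variable {N : ℕ} {V H₀ : Type*} [NormedAddCommGroup V] [NormedSpace ℝ V]
  [NormedAddCommGroup H₀] [InnerProductSpace ℝ H₀] (ι : V →L[ℝ] H₀)
  (a : V →ₗ[ℝ] V →ₗ[ℝ] ℝ)

/-- `η` lies in the tangent space `T_φ` of the Stiefel manifold at `φ`. -/
def IsTangent (φ η : Fin N → V) : Prop := outerProdI ι η φ + outerProdI ι φ η = 0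

theorem pos_of_coercive (hcoer : ∃ α > 0, ∀ u : V, α * ‖u‖ ^ 2 ≤ a u u) (u : V) (hu : u ≠ 0) :
    0 < a u u := by
  obtain ⟨α, hα, hαu⟩ := hcoer
  exact (mul_pos hα (pow_pos (norm_pos_iff.2 hu) 2)).trans_le (hαu u)

theorem eq_zero_of_sum_apply_self_eq_zero (hpos : ∀ u, u ≠ 0 → 0 < a u u) {d : Fin N → V}
    (hd : ∑ j, a (d j) (d j) = 0) : d = 0 := by
  have hnonneg : ∀ u, 0 ≤ a u u := fun u => by
    rcases eq_or_ne u 0 with rfl | hu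
    · simp
    · exact (hpos u hu).le
  funext j
  by_contra hj
  have := (Finset.sum_eq_zero_iff_of_nonneg fun i _ => hnonneg (d i)).1 hd j (Finset.mem_univ j)
  exact (hpos _ hj).ne' this

theorem eq_of_forall_isTangent_of_innerHI_SijMat_eq (hpos : ∀ u, u ≠ 0 → 0 < a u u)
    {φ z z' : Fin N → V}
    (hz : ∀ η, IsTangent ι φ η → ∑ j, a (z j) (η j) = 0)
    (hz' : ∀ η, IsTangent ι φ η → ∑ j, a (z' j) (η j) = 0)
    (hH : ∀ i j, i ≤ j →
      innerHI ι z (smulMat φ (SijMat i j)) = innerHI ι z' (smulMat φ (SijMat i j))) :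
    z = z' := by
  have htan : IsTangent ι φ (z - z') := by
    have := SijMat.add_transpose_eq_zero_of_trace_mul (E := outerProdI ι (z - z') φ)
      fun i j hij => by
        rw [outerProdI_sub_left, Matrix.sub_mul, trace_sub, ← innerHI_smulMat_right,
          ← innerHI_smulMat_right, hH i j hij, sub_self]
    rwa [transpose_outerProdI] at this
  have henergy : ∑ j, a ((z - z') j) ((z - z') j) = 0 := by
    rw [show ∑ j, a ((z - z') j) ((z - z') j)
        = ∑ j, a (z j) ((z - z') j) - ∑ j, a (z' j) ((z - z') j) by
      simp only [Pi.sub_apply, LinearMap.map_sub₂, Finset.sum_sub_distrib],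
      hz _ htan, hz' _ htan, sub_self]
  exact sub_eq_zero.1 (eq_zero_of_sum_apply_self_eq_zero a hpos henergy)

end BilinearForm

section SolutionOperator

variable {N : ℕ} {V H₀ : Type*} [NormedAddCommGroup V] [NormedSpace ℝ V]
  [NormedAddCommGroup H₀] [InnerProductSpace ℝ H₀] {ι : V →L[ℝ] H₀}
  {a : V →ₗ[ℝ] V →ₗ[ℝ] ℝ} {T : H₀ → V} {φ : Fin N → V}

theorem Mmat_eq_outerProdI : Mmat ι T φ = outerProdI ι φ (Tphi ι T φ) := rfl

theorem Mmat_apply_eq (hT : ∀ f w, a (T f) w = ⟪f, ι w⟫) (i j : Fin N) :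
    Mmat ι T φ i j = a (Tphi ι T φ i) (Tphi ι T φ j) :=
  (hT _ _).symm

theorem apply_smulMat_Tphi (hT : ∀ f w, a (T f) w = ⟪f, ι w⟫)
    (S : Matrix (Fin N) (Fin N) ℝ) (j : Fin N) (w : V) :
    a (smulMat (Tphi ι T φ) S j) w = ⟪ι (smulMat φ S j), ι w⟫ := by
  simp [smulMat, Tphi, hT, sum_inner, real_inner_smul_left]

theorem sum_apply_smulMat_Tphi (hT : ∀ f w, a (T f) w = ⟪f, ι w⟫)
    (S : Matrix (Fin N) (Fin N) ℝ) (η : Fin N → V) :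
    ∑ j, a (smulMat (Tphi ι T φ) S j) (η j) = innerHI ι (smulMat φ S) η := by
  simp only [apply_smulMat_Tphi hT, innerHI]

theorem Mmat_posDef (hT : ∀ f w, a (T f) w = ⟪f, ι w⟫) (hsymm : ∀ u w, a u w = a w u)
    (hpos : ∀ u, u ≠ 0 → 0 < a u u) (hφ : outerProdI ι φ φ = 1) :
    (Mmat ι T φ).PosDef := by
  refine PosDef.of_dotProduct_mulVec_pos ?_ fun x hx => ?_
  · rw [isHermitian_iff_isSymm]
    ext i j
    simp only [transpose_apply, Mmat_apply_eq hT, hsymm]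
  · set u := ∑ i, x i • Tphi ι T φ i
    have hcoord : ∀ k, a u (φ k) = x k := fun k => by
      have hφk : ∀ i, ⟪ι (φ i), ι (φ k)⟫ = (1 : Matrix (Fin N) (Fin N) ℝ) i k := fun i => by
        rw [← hφ]; rfl
      simp [u, Tphi, hT, hφk, one_apply]
    have hu : u ≠ 0 := fun hu => hx (funext fun k => by simp [← hcoord k, hu])
    have hquad : star x ⬝ᵥ (Mmat ι T φ *ᵥ x) = a u u := by
      simp only [u, dotProduct, mulVec, Mmat_apply_eq hT, map_sum, map_smul, LinearMap.sum_apply,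
        LinearMap.smul_apply, smul_eq_mul, Finset.mul_sum, star_trivial]
      rw [Finset.sum_comm]
      exact Finset.sum_congr rfl fun _ _ => Finset.sum_congr rfl fun _ _ => by ring
    exact hquad ▸ hpos u hu

theorem outerProdI_smulMat_Tphi_inv (hdet : IsUnit (Mmat ι T φ).det) :
    outerProdI ι (smulMat (Tphi ι T φ) (Mmat ι T φ)⁻¹) φ = 1 := by
  rw [outerProdI_smulMat_left, ← transpose_outerProdI, ← Mmat_eq_outerProdI, ← transpose_mul,
    mul_nonsing_inv _ hdet, transpose_one]

theorem sum_apply_smulMat_Tphi_inv_eq_zero (hT : ∀ f w, a (T f) w = ⟪f, ι w⟫)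
    (hM : (Mmat ι T φ).IsSymm) {η : Fin N → V} (hη : IsTangent ι φ η) :
    ∑ j, a (smulMat (Tphi ι T φ) (Mmat ι T φ)⁻¹ j) (η j) = 0 := by
  rw [sum_apply_smulMat_Tphi hT, innerHI_eq_trace, outerProdI_smulMat_left, hM.inv.eq]
  refine trace_mul_eq_zero_of_isSymm_of_add_transpose_eq_zero hM.inv ?_
  rwa [transpose_outerProdI, add_comm]

theorem innerHI_smulMat_Tphi_inv_SijMat (hdet : IsUnit (Mmat ι T φ).det) (i j : Fin N) :
    innerHI ι (smulMat (Tphi ι T φ) (Mmat ι T φ)⁻¹) (smulMat φ (SijMat i j)) =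
      if i = j then 1 else 0 := by
  rw [innerHI_smulMat_right, outerProdI_smulMat_Tphi_inv hdet, one_mul, SijMat.trace]

end SolutionOperator

theorem psi_explicit_formula_general {N : ℕ}
    {V H₀ : Type*}
    [NormedAddCommGroup V] [InnerProductSpace ℝ V]
    [NormedAddCommGroup H₀] [InnerProductSpace ℝ H₀]
    (ι : V →L[ℝ] H₀)
    (aForm : V →ₗ[ℝ] V →ₗ[ℝ] ℝ)
    (hsymm : ∀ u w : V, aForm u w = aForm w u)
    (hcoer : ∃ α > 0, ∀ u : V, α * ‖u‖ ^ 2 ≤ aForm u u)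
    (T : H₀ → V) (hT : ∀ (f : H₀) (w : V), aForm (T f) w = ⟪f, ι w⟫)
    (φ : Fin N → V) (hφ : outerProdI ι φ φ = 1)
    (ψfam : Fin N → Fin N → Fin N → V)
    (hψa : ∀ k ℓ : Fin N, k ≤ ℓ →
      ∀ η : Fin N → V, outerProdI ι η φ + outerProdI ι φ η = 0 →
        (∑ j, aForm (ψfam k ℓ j) (η j)) = 0)
    (hψH : ∀ k ℓ : Fin N, k ≤ ℓ → ∀ i j : Fin N, i ≤ j →
      innerHI ι (ψfam k ℓ) (smulMat φ (SijMat i j)) =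
        (if i = k then (1 : ℝ) else 0) * (if j = ℓ then (1 : ℝ) else 0)) :
    IsUnit (Mmat ι T φ).det ∧
    (∀ η : Fin N → V, outerProdI ι η φ + outerProdI ι φ η = 0 →
      (∑ j, aForm (smulMat (Tphi (↑ι) T φ) (Mmat ι T φ)⁻¹ j) (η j)) = 0) ∧
    (∀ i j : Fin N, i ≤ j →
      innerHI ι (smulMat (Tphi (↑ι) T φ) (Mmat ι T φ)⁻¹) (smulMat φ (SijMat i j)) =
        if i = j then (1 : ℝ) else 0) ∧
    (∀ z : Fin N → V,
      (∀ η : Fin N → V, outerProdI ι η φ + outerProdI ι φ η = 0 →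
        (∑ j, aForm (z j) (η j)) = 0) →
      (∀ i j : Fin N, i ≤ j →
        innerHI ι z (smulMat φ (SijMat i j)) = if i = j then (1 : ℝ) else 0) →
      z = smulMat (Tphi (↑ι) T φ) (Mmat ι T φ)⁻¹) ∧
    smulMat (Tphi (↑ι) T φ) (Mmat ι T φ)⁻¹ = ∑ k, ψfam k k := by
  have hpos := pos_of_coercive aForm hcoer
  have hM := Mmat_posDef hT hsymm hpos hφ
  have hdet : IsUnit (Mmat ι T φ).det := (isUnit_iff_isUnit_det _).1 hM.isUnit
  have hψ_tangent := fun η (hη : IsTangent ι φ η) =>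
    sum_apply_smulMat_Tphi_inv_eq_zero hT (isHermitian_iff_isSymm.1 hM.isHermitian) hη
  have hψ_SijMat := innerHI_smulMat_Tphi_inv_SijMat hdet (φ := φ)
  have huniq : ∀ z : Fin N → V, (∀ η, IsTangent ι φ η → ∑ j, aForm (z j) (η j) = 0) →
      (∀ i j, i ≤ j → innerHI ι z (smulMat φ (SijMat i j)) = if i = j then 1 else 0) →
      z = smulMat (Tphi ι T φ) (Mmat ι T φ)⁻¹ := fun z hz hzH =>
    eq_of_forall_isTangent_of_innerHI_SijMat_eq ι aForm hpos hz hψ_tangent fun i j hij => by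
      rw [hzH i j hij, hψ_SijMat]
  have hsum_tangent : ∀ η, IsTangent ι φ η → ∑ j, aForm ((∑ k, ψfam k k) j) (η j) = 0 :=
    fun η hη => by
      simp only [Finset.sum_apply, map_sum, LinearMap.sum_apply]
      rw [Finset.sum_comm]
      exact Finset.sum_eq_zero fun k _ => hψa k k le_rfl η hη
  have hsum_SijMat : ∀ i j, i ≤ j →
      innerHI ι (∑ k, ψfam k k) (smulMat φ (SijMat i j)) = if i = j then 1 else 0 :=
    fun i j hij => by simp [innerHI_sum_left, hψH _ _ le_rfl i j hij]
  exact ⟨hdet, hψ_tangent, fun i j _ => hψ_SijMat i j, huniq,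
    (huniq _ hsum_tangent hsum_SijMat).symm⟩

/-- `M = ⟦φ, Tφ⟧` is invertible and `ψ = (Tφ)·M⁻¹` is the unique element
with `a(ψ, η) = 0` for all tangent `η` and `(ψ, φ S^{ij})_H = δ_{ij}`; moreover
`ψ = Σ_k ψ^{kk}`. -/
theorem psi_explicit_formula {N : ℕ} (hN : 1 ≤ N)
    {V H₀ : Type*}
    [NormedAddCommGroup V] [InnerProductSpace ℝ V] [CompleteSpace V]
    [NormedAddCommGroup H₀] [InnerProductSpace ℝ H₀] [CompleteSpace H₀]
    (ι : V →L[ℝ] H₀) (hι : Function.Injective ι) (hdense : DenseRange ι)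
    (aForm : V →ₗ[ℝ] V →ₗ[ℝ] ℝ)
    (hsymm : ∀ u w : V, aForm u w = aForm w u)
    (hcoer : ∃ α > 0, ∀ u : V, α * ‖u‖ ^ 2 ≤ aForm u u)
    (hbdd : ∃ β > 0, ∀ u w : V, |aForm u w| ≤ β * ‖u‖ * ‖w‖)
    (T : H₀ → V) (hT : ∀ (f : H₀) (w : V), aForm (T f) w = ⟪f, ι w⟫)
    (φ : Fin N → V) (hφ : outerProdI ι φ φ = 1)
    (ψfam : Fin N → Fin N → Fin N → V)
    (hψa : ∀ k ℓ : Fin N, k ≤ ℓ →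
      ∀ η : Fin N → V, outerProdI ι η φ + outerProdI ι φ η = 0 →
        (∑ j, aForm (ψfam k ℓ j) (η j)) = 0)
    (hψH : ∀ k ℓ : Fin N, k ≤ ℓ → ∀ i j : Fin N, i ≤ j →
      innerHI ι (ψfam k ℓ) (smulMat φ (SijMat i j)) =
        (if i = k then (1 : ℝ) else 0) * (if j = ℓ then (1 : ℝ) else 0)) :
    IsUnit (Mmat ι T φ).det ∧
    (∀ η : Fin N → V, outerProdI ι η φ + outerProdI ι φ η = 0 →
      (∑ j, aForm (smulMat (Tphi (↑ι) T φ) (Mmat ι T φ)⁻¹ j) (η j)) = 0) ∧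
    (∀ i j : Fin N, i ≤ j →
      innerHI ι (smulMat (Tphi (↑ι) T φ) (Mmat ι T φ)⁻¹) (smulMat φ (SijMat i j)) =
        if i = j then (1 : ℝ) else 0) ∧
    (∀ z : Fin N → V,
      (∀ η : Fin N → V, outerProdI ι η φ + outerProdI ι φ η = 0 →
        (∑ j, aForm (z j) (η j)) = 0) →
      (∀ i j : Fin N, i ≤ j →
        innerHI ι z (smulMat φ (SijMat i j)) = if i = j then (1 : ℝ) else 0) →
      z = smulMat (Tphi (↑ι) T φ) (Mmat ι T φ)⁻¹) ∧
    smulMat (Tphi (↑ι) T φ) (Mmat ι T φ)⁻¹ = ∑ k, ψfam k k :=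
  psi_explicit_formula_general ι aForm hsymm hcoer T hT φ hφ ψfam hψa hψH
end
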